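/- Let u : [0,T] → H²(ℝ) satisfy the conservation of mass I₁(t) = ∫u(t)² dx = I₁(0) and of energy I₂(t) = (1/6)∫u(t)³ dx + (1/2)∫(∂_x²u(t))² dx = I₂(0), with u(0) = u₀ ∈ H²(ℝ). Then there exists a constant C > 0, independent of u₀, T and t, such that ‖u(t)‖²_{H²} ≤ C(‖u₀‖²_{H²} + ‖u₀‖³_{H²} + ‖u₀‖⁴_{H²}) for all t ∈ [0,T]. -/

import Mathlib

open MeasureTheory

/-- The squared `H²(ℝ)` norm of a Schwartz function. -/
noncomputable def H2sq (f : SchwartzMap ℝ ℝ) : ℝ :=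
  (∫ x : ℝ, (f x) ^ 2) + (∫ x : ℝ, (deriv f x) ^ 2) + ∫ x : ℝ, (iteratedDeriv 2 f x) ^ 2

/-!
Integration by parts gives `∫ (∂ₓu)² = -∫ u ∂ₓ²u ≤ ½ (∫ u² + ∫ (∂ₓ²u)²)`, and writing
`u(x)² = -∫ₓ^∞ 2 u ∂ₓu` gives `‖u‖²_∞ ≤ ‖u‖²_{H¹}`, hence `|∫ u³| ≤ ‖u‖_{H¹} ‖u‖²_{L²}`.
Mass conservation fixes `∫ u(t)² = ∫ u₀²`, and energy conservation bounds `∫ (∂ₓ²u(t))²` by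
`∫ (∂ₓ²u₀)²` plus the two cubic terms. The initial one is at most `‖u₀‖³_{H²}`; by Young's
inequality the one at time `t` is at most `‖u₀‖⁴_{L²}/4 + ‖u(t)‖²_{H¹}`, whose `∂ₓu` part is
reabsorbed by the interpolation inequality.
-/

open Filter Set
open scoped SchwartzMap

namespace SchwartzMap

variable (f g : 𝓢(ℝ, ℝ))

theorem integrable_mul : Integrable (fun x => f x * g x) :=
  (pairing (ContinuousLinearMap.mul ℝ ℝ) f g).integrable

theorem integrable_sq : Integrable (fun x => f x ^ 2) := by
  simpa only [sq] using f.integrable_mul f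

theorem integrable_cube : Integrable (fun x => f x ^ 3) := by
  refine ((pairing (ContinuousLinearMap.mul ℝ ℝ) f f).integrable_mul f).congr
    (ae_of_all _ fun x => ?_)
  simp [pow_succ]

theorem integrable_deriv_sq : Integrable (fun x => deriv f x ^ 2) :=
  (derivCLM ℝ ℝ f).integrable_sq

theorem iteratedDeriv_two_eq_deriv_derivCLM : iteratedDeriv 2 f = deriv (derivCLM ℝ ℝ f) := by
  rw [iteratedDeriv_succ, iteratedDeriv_one]
  rfl

theorem integrable_iteratedDeriv_two_sq : Integrable (fun x => iteratedDeriv 2 f x ^ 2) := by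
  rw [iteratedDeriv_two_eq_deriv_derivCLM]
  exact (derivCLM ℝ ℝ f).integrable_deriv_sq

theorem integral_deriv_sq_eq_neg_integral_mul_iteratedDeriv_two :
    ∫ x, deriv f x ^ 2 = -∫ x, f x * iteratedDeriv 2 f x := by
  rw [iteratedDeriv_two_eq_deriv_derivCLM, integral_mul_deriv_eq_neg_deriv_mul, neg_neg]
  simp only [derivCLM_apply, sq]

theorem integral_deriv_sq_le :
    ∫ x, deriv f x ^ 2 ≤ ((∫ x, f x ^ 2) + ∫ x, iteratedDeriv 2 f x ^ 2) / 2 := by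
  have hint := f.integrable_sq.add f.integrable_iteratedDeriv_two_sq
  rw [integral_deriv_sq_eq_neg_integral_mul_iteratedDeriv_two, ← integral_add f.integrable_sq
    f.integrable_iteratedDeriv_two_sq, ← integral_div, ← integral_neg]
  refine integral_mono ?_ (hint.div_const 2) fun x => ?_
  · rw [iteratedDeriv_two_eq_deriv_derivCLM]
    exact (f.integrable_mul (derivCLM ℝ ℝ (derivCLM ℝ ℝ f))).neg
  · nlinarith [sq_nonneg (f x + iteratedDeriv 2 f x)]

theorem sq_le_integral_sq_add_integral_deriv_sq (x : ℝ) :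
    f x ^ 2 ≤ (∫ y, f y ^ 2) + ∫ y, deriv f y ^ 2 := by
  have hint := f.integrable_sq.add f.integrable_deriv_sq
  have hff' : Integrable (fun y => 2 * f y * deriv f y) :=
    ((f.integrable_mul (derivCLM ℝ ℝ f)).const_mul 2).congr
      (ae_of_all _ fun y => by simp [mul_assoc])
  have hftc : ∫ y in Ioi x, 2 * f y * deriv f y = 0 - f x ^ 2 := by
    refine integral_Ioi_of_hasDerivAt_of_tendsto' (f := fun y => f y ^ 2) (fun y _ => ?_)
      hff'.integrableOn ?_
    · simpa [mul_comm] using (f.hasDerivAt y).fun_pow 2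
    · simpa using ((zero_at_infty f).mono_left atTop_le_cocompact).pow 2
  calc f x ^ 2 = ∫ y in Ioi x, -(2 * f y * deriv f y) := by rw [integral_neg, hftc]; ring
    _ ≤ ∫ y in Ioi x, (f y ^ 2 + deriv f y ^ 2) :=
        setIntegral_mono_on hff'.neg.integrableOn hint.integrableOn measurableSet_Ioi
          fun y _ => by nlinarith [sq_nonneg (f y + deriv f y)]
    _ ≤ ∫ y, (f y ^ 2 + deriv f y ^ 2) :=
        setIntegral_le_integral hint (ae_of_all _ fun y => by positivity)
    _ = (∫ y, f y ^ 2) + ∫ y, deriv f y ^ 2 := integral_add f.integrable_sq f.integrable_deriv_sq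

theorem abs_integral_cube_le :
    |∫ x, f x ^ 3| ≤ √((∫ x, f x ^ 2) + ∫ x, deriv f x ^ 2) * ∫ x, f x ^ 2 := by
  rw [← integral_const_mul]
  refine abs_integral_le_integral_abs.trans <|
    integral_mono f.integrable_cube.abs (f.integrable_sq.const_mul _) fun x => ?_
  calc |f x ^ 3| = |f x| * f x ^ 2 := by rw [abs_pow, pow_succ', sq_abs]
    _ ≤ _ := by
      gcongr
      exact Real.abs_le_sqrt (f.sq_le_integral_sq_add_integral_deriv_sq x)


theorem abs_integral_cube_le_young :
    |∫ x, f x ^ 3| ≤ (∫ x, f x ^ 2) ^ 2 / 4 + ((∫ x, f x ^ 2) + ∫ x, deriv f x ^ 2) := by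
  have hS : 0 ≤ (∫ x, f x ^ 2) + ∫ x, deriv f x ^ 2 := by positivity
  nlinarith [f.abs_integral_cube_le, Real.sq_sqrt hS,
    sq_nonneg (√((∫ x, f x ^ 2) + ∫ x, deriv f x ^ 2) - (∫ x, f x ^ 2) / 2)]

end SchwartzMap

theorem H2sq_nonneg (f : 𝓢(ℝ, ℝ)) : 0 ≤ H2sq f := by
  unfold H2sq; positivity

theorem abs_integral_cube_le_H2sq (f : 𝓢(ℝ, ℝ)) : |∫ x, f x ^ 3| ≤ √(H2sq f) * H2sq f := by
  have h₁ : 0 ≤ ∫ x, deriv f x ^ 2 := by positivity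
  have h₂ : 0 ≤ ∫ x, iteratedDeriv 2 f x ^ 2 := by positivity
  refine f.abs_integral_cube_le.trans (mul_le_mul ?_ ?_ (by positivity) (Real.sqrt_nonneg _))
  · exact Real.sqrt_le_sqrt (by unfold H2sq; linarith)
  · unfold H2sq; linarith

theorem H2sq_le_of_conserved (f₀ f : 𝓢(ℝ, ℝ)) (hmass : ∫ x, f x ^ 2 = ∫ x, f₀ x ^ 2)
    (henergy : (1 / 6) * (∫ x, f x ^ 3) + (1 / 2) * (∫ x, iteratedDeriv 2 f x ^ 2) =
      (1 / 6) * (∫ x, f₀ x ^ 3) + (1 / 2) * ∫ x, iteratedDeriv 2 f₀ x ^ 2) :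
    H2sq f ≤ 5 * (H2sq f₀ + √(H2sq f₀) * H2sq f₀ + H2sq f₀ ^ 2) := by
  have h₀ : 0 ≤ ∫ x, f₀ x ^ 2 := by positivity
  have h₁ : 0 ≤ ∫ x, deriv f₀ x ^ 2 := by positivity
  have h₂ : 0 ≤ ∫ x, iteratedDeriv 2 f₀ x ^ 2 := by positivity
  have hH2₀ : H2sq f₀ =
      (∫ x, f₀ x ^ 2) + (∫ x, deriv f₀ x ^ 2) + ∫ x, iteratedDeriv 2 f₀ x ^ 2 := rfl
  have hmass_sq : (∫ x, f₀ x ^ 2) ^ 2 ≤ H2sq f₀ ^ 2 := by gcongr; linarith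
  have hcube₀ := abs_integral_cube_le_H2sq f₀
  have hcube := f.abs_integral_cube_le_young
  have hD := f.integral_deriv_sq_le
  rw [hmass] at hcube hD
  have hD2 : ∫ x, iteratedDeriv 2 f x ^ 2 ≤
      (∫ x, iteratedDeriv 2 f₀ x ^ 2) + (√(H2sq f₀) * H2sq f₀ + |∫ x, f x ^ 3|) / 3 := by
    linarith [neg_abs_le (∫ x, f x ^ 3), le_abs_self (∫ x, f₀ x ^ 3)]
  show (∫ x, f x ^ 2) + (∫ x, deriv f x ^ 2) + ∫ x, iteratedDeriv 2 f x ^ 2 ≤ _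
  rw [hmass]
  linarith [mul_nonneg (Real.sqrt_nonneg (H2sq f₀)) (H2sq_nonneg f₀), sq_nonneg (H2sq f₀)]

/-- If `u(t)` conserves mass `I₁` and energy `I₂ = (1/6)∫u³ + (1/2)∫(∂ₓ²u)²`, then
`‖u(t)‖²_{H²} ≤ C(‖u₀‖²_{H²} + ‖u₀‖³_{H²} + ‖u₀‖⁴_{H²})` with `C` independent
of `u₀`, `T` and `t`. -/
theorem apriori_H2_fifth_kdv :
    ∃ C : ℝ, 0 < C ∧ ∀ (T : ℝ), 0 < T → ∀ (u₀ : SchwartzMap ℝ ℝ) (u : ℝ → SchwartzMap ℝ ℝ),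
      u 0 = u₀ →
      (∀ t ∈ Set.Icc (0 : ℝ) T, (∫ x : ℝ, (u t x) ^ 2) = ∫ x : ℝ, (u₀ x) ^ 2) →
      (∀ t ∈ Set.Icc (0 : ℝ) T,
        (1 / 6) * (∫ x : ℝ, (u t x) ^ 3) + (1 / 2) * (∫ x : ℝ, (iteratedDeriv 2 (u t) x) ^ 2) =
        (1 / 6) * (∫ x : ℝ, (u₀ x) ^ 3) + (1 / 2) * ∫ x : ℝ, (iteratedDeriv 2 u₀ x) ^ 2) →
      ∀ t ∈ Set.Icc (0 : ℝ) T,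
        H2sq (u t) ≤
          C * (Real.sqrt (H2sq u₀) ^ 2 + Real.sqrt (H2sq u₀) ^ 3 + Real.sqrt (H2sq u₀) ^ 4) := by
  refine ⟨5, by norm_num, fun T _ u₀ u _ hmass henergy t ht => ?_⟩
  set s := √(H2sq u₀)
  have hs : H2sq u₀ = s ^ 2 := (Real.sq_sqrt (H2sq_nonneg u₀)).symm
  calc H2sq (u t) ≤ 5 * (H2sq u₀ + s * H2sq u₀ + H2sq u₀ ^ 2) :=
        H2sq_le_of_conserved u₀ (u t) (hmass t ht) (henergy t ht)
    _ = 5 * (s ^ 2 + s ^ 3 + s ^ 4) := by rw [hs]; ring
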